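/- Let G be a connected finite simple graph, x a Perron vector of G, and u* a vertex at which x attains its maximum. Suppose the induced subgraph G[N(u*)] contains no path on 6 vertices as a subgraph. Let H be a connected component of G[N(u*)] with at least 6 vertices and minimum degree δ(H) ≥ 2. If η(H) = −3, then H is isomorphic to K_2 ∨ (|V(H)| − 2)K_1 (two adjacent vertices each joined to |V(H)| − 2 independent vertices). -/

import Mathlib

open Matrix Finset

/-- The spectral radius of a finite simple graph: the largest (real) eigenvalue of its
adjacency matrix, expressed as the supremum of the set of real eigenvalues. -/
noncomputable def specRad {V : Type*} [Fintype V] (G : SimpleGraph V)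
    [DecidableRel G.Adj] : ℝ :=
  sSup {t : ℝ | ∃ x : V → ℝ, x ≠ 0 ∧ (G.adjMatrix ℝ) *ᵥ x = t • x}

/-- `H` is contained in `G` as a (not necessarily induced) subgraph. -/
def ContainsSub {α β : Type*} (H : SimpleGraph α) (G : SimpleGraph β) : Prop :=
  ∃ f : α → β, Function.Injective f ∧ ∀ ⦃a b⦄, H.Adj a b → G.Adj (f a) (f b)

/-- The fan graph `H₇ = K₁ ∨ P₆`: vertex `6` is joined to every vertex of the
path `0-1-2-3-4-5`. -/
def fanH7 : SimpleGraph (Fin 7) :=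
  SimpleGraph.fromRel (fun i j => i = 6 ∨ j = 6 ∨ (j : ℕ) = (i : ℕ) + 1)

/-- A graph is `H₇`-free if it contains no subgraph isomorphic to the fan `H₇`. -/
def H7Free {β : Type*} (G : SimpleGraph β) : Prop := ¬ ContainsSub fanH7 G

/-- `K₃ ∨ kK₁`: the join of a triangle (vertices `0,1,2`) with `k` isolated vertices. -/
def K3Join (k : ℕ) : SimpleGraph (Fin (k + 3)) :=
  SimpleGraph.fromRel (fun i j => (i : ℕ) < 3 ∨ (j : ℕ) < 3)

instance (k : ℕ) : DecidableRel (K3Join k).Adj := fun a b =>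
  decidable_of_iff (a ≠ b ∧ ((a : ℕ) < 3 ∨ (b : ℕ) < 3)) (by
    rw [K3Join, SimpleGraph.fromRel_adj]; tauto)

/-- `K₂ ∨ tK₁`: the join of an edge (vertices `0,1`) with `t` isolated vertices. -/
def K2Join (t : ℕ) : SimpleGraph (Fin (t + 2)) :=
  SimpleGraph.fromRel (fun i j => (i : ℕ) < 2 ∨ (j : ℕ) < 2)

/-- The star `K_{1,s}`: vertex `0` joined to `s` independent vertices. -/
def starGraph (s : ℕ) : SimpleGraph (Fin (s + 1)) :=
  SimpleGraph.fromRel (fun i j => i = 0 ∨ j = 0)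

/-- `K₁ ∨ (K₃ ∪ tK₁)`: vertex `0` joined to all of a triangle `1,2,3` and to `t`
further vertices which are otherwise isolated. -/
def K1JoinK3Union (t : ℕ) : SimpleGraph (Fin (t + 4)) :=
  SimpleGraph.fromRel (fun i j => i = 0 ∨ j = 0 ∨ ((i : ℕ) ≤ 3 ∧ (j : ℕ) ≤ 3))

/-- `C₆^△`: a 6-cycle `0-1-2-3-4-5-0` plus a vertex `6` adjacent to the two adjacent
cycle vertices `0` and `1`. -/
def C6Tri : SimpleGraph (Fin 7) :=
  SimpleGraph.fromRel (fun i j =>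
    ((i : ℕ) < 6 ∧ (j : ℕ) = ((i : ℕ) + 1) % 6) ∨ (i = 6 ∧ (j = 0 ∨ j = 1)))

/-- `F₃`: three triangles `{0,1,2}`, `{0,3,4}`, `{0,5,6}` sharing the common vertex `0`. -/
def friendshipF3 : SimpleGraph (Fin 7) :=
  SimpleGraph.fromRel (fun i j =>
    i = 0 ∨ j = 0 ∨ ((j : ℕ) = (i : ℕ) + 1 ∧ (i : ℕ) % 2 = 1))

/-- The number of edges of `G` with both end vertices in `S`. -/
noncomputable def edgesIn {V : Type*} (G : SimpleGraph V) (S : Set V) : ℕ :=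
  {e ∈ G.edgeSet | ∀ v ∈ e, v ∈ S}.ncard

/-- The quantity `η(H)` for the subgraph `H = G[S]` induced on a vertex set `S`:
`η(H) = Σ_{u ∈ S} (d_H(u) − 2)·x_u/x_{u*} − e(H)`. -/
noncomputable def etaVal {V : Type*} [Fintype V] [DecidableEq V] (G : SimpleGraph V)
    [DecidableRel G.Adj] (x : V → ℝ) (ustar : V) (S : Finset V) : ℝ :=
  (∑ u ∈ S, (((S.filter (fun w => G.Adj u w)).card : ℝ) - 2) * x u / x ustar)
    - edgesIn G (S : Set V)

/-- `H` is isomorphic to `K₅` with two (distinct) edges removed, in either configuration. -/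
def IsK5Minus2e {α : Type*} (H : SimpleGraph α) : Prop :=
  ∃ e₁ e₂ : Sym2 (Fin 5), ¬ e₁.IsDiag ∧ ¬ e₂.IsDiag ∧ e₁ ≠ e₂ ∧
    Nonempty (H ≃g (⊤ : SimpleGraph (Fin 5)).deleteEdges {e₁, e₂})

/-!
Since `x_u ≤ x_{u*}` and every vertex of `H` has degree at least 2, each term
`(d_H(u) - 2) x_u / x_{u*}` is at most `d_H(u) - 2`, so `η(H) = -3` forces `e(H) ≥ 2|V(H)| - 3`.

A connected graph with minimum degree 2 on at least five vertices contains a path `a b c d e`.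
If `H` is also `P₆`-free, the way the remaining vertices can attach to this path is very
restricted: either some vertex off the path sees `c` but neither `b` nor `d`, and then every
vertex other than `c` has degree at most 2 (a friendship-like configuration), or every vertex off
the path has all its neighbours in `{b, d}`, and then so do `a`, `c` and `e`. In both cases all
vertices but two have degree at most 2, and counting degrees against `e(H) ≥ 2|V(H)| - 3` makes
those two vertices universal and all the others of degree exactly 2: this is `K₂ ∨ (|V(H)| - 2)K₁`.
-/

namespace SimpleGraph

-- lets `grind` discharge the distinctness side conditions of the paths built below
attribute [local grind →] Adj.ne Adj.symm

section General

variable {α : Type*} {H : SimpleGraph α}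

theorem containsSub_pathGraph_of_isChain {l : List α} (hl : l.Nodup) (hc : l.IsChain H.Adj) :
    ContainsSub (pathGraph l.length) H := by
  refine ⟨l.get, hl.injective_get, fun i j hij => ?_⟩
  rcases pathGraph_adj.mp hij with h | h
  · simpa [← h] using hc.getElem i (h ▸ j.2)
  · simpa [← h] using (hc.getElem j (h ▸ i.2)).symm

theorem containsSub_pathGraph_six {u₁ u₂ u₃ u₄ u₅ u₆ : α} (hl : [u₁, u₂, u₃, u₄, u₅, u₆].Nodup)
    (h₁ : H.Adj u₁ u₂) (h₂ : H.Adj u₂ u₃) (h₃ : H.Adj u₃ u₄) (h₄ : H.Adj u₄ u₅)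
    (h₅ : H.Adj u₅ u₆) : ContainsSub (pathGraph 6) H :=
  containsSub_pathGraph_of_isChain hl (by simp [*])

theorem _root_.ContainsSub.trans_embedding {α β γ : Type*} {F : SimpleGraph α} {G : SimpleGraph β}
    {G' : SimpleGraph γ} (h : ContainsSub F G) (f : G ↪g G') : ContainsSub F G' := by
  obtain ⟨g, hg, hadj⟩ := h
  exact ⟨f ∘ g, f.injective.comp hg, fun _ _ hab => f.map_adj_iff.mpr (hadj hab)⟩

theorem Connected.exists_adj_of_not {P : α → Prop} (hconn : H.Connected) {p q : α}
    (hp : P p) (hq : ¬ P q) : ∃ s t, P s ∧ ¬ P t ∧ H.Adj s t := by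
  obtain ⟨d, -, hd₁, hd₂⟩ := (hconn.preconnected p q).some.exists_boundary_dart {x | P x} hp hq
  exact ⟨_, _, hd₁, hd₂, d.adj⟩

theorem exists_notMem_of_length_lt [Fintype α] {l : List α}
    (hl : l.length < Fintype.card α) : ∃ u, u ∉ l := by
  classical
  obtain ⟨u, -, hu⟩ := Finset.exists_mem_notMem_of_card_lt_card
    (s := l.toFinset) (t := Finset.univ) ((List.toFinset_card_le l).trans_lt hl)
  exact ⟨u, by simpa using hu⟩

variable [Fintype α] [DecidableRel H.Adj] {v p q : α}

theorem exists_adj_ne_of_two_le_degree (hv : 2 ≤ H.degree v) (w : α) :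
    ∃ t, t ≠ w ∧ H.Adj v t := by
  rw [← card_neighborFinset_eq_degree] at hv
  obtain ⟨t, ht, t', ht', hne⟩ := Finset.one_lt_card.mp hv
  rw [mem_neighborFinset] at ht ht'
  by_cases htw : t = w
  · exact ⟨t', fun h => hne (htw.trans h.symm), ht'⟩
  · exact ⟨t, htw, ht⟩

variable [DecidableEq α]

theorem neighborFinset_subset_pair (h : ∀ t, H.Adj v t → t = p ∨ t = q) :
    H.neighborFinset v ⊆ {p, q} := fun t ht => by
  rcases h t ((mem_neighborFinset _ _ _).mp ht) with rfl | rfl <;> simp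

theorem degree_le_two_of_forall_adj (h : ∀ t, H.Adj v t → t = p ∨ t = q) : H.degree v ≤ 2 := by
  rw [← card_neighborFinset_eq_degree]
  exact (Finset.card_le_card (neighborFinset_subset_pair h)).trans Finset.card_le_two

theorem adj_and_adj_of_forall_adj (h : ∀ t, H.Adj v t → t = p ∨ t = q) (hv : 2 ≤ H.degree v) :
    H.Adj v p ∧ H.Adj v q := by
  have heq := Finset.eq_of_subset_of_card_le (neighborFinset_subset_pair h)
    (Finset.card_le_two.trans (by rwa [card_neighborFinset_eq_degree]))
  simp only [Finset.ext_iff, mem_neighborFinset, Finset.mem_insert, Finset.mem_singleton] at heq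
  exact ⟨(heq p).mpr (Or.inl rfl), (heq q).mpr (Or.inr rfl)⟩

end General

section LongPath

variable {α : Type*} [Fintype α] {H : SimpleGraph α} [DecidableRel H.Adj]

theorem exists_path4 (hconn : H.Connected) (htwo : ∀ v, 2 ≤ H.degree v)
    (hcard : 4 ≤ Fintype.card α) :
    ∃ p q r s : α, [p, q, r, s].Nodup ∧ H.Adj p q ∧ H.Adj q r ∧ H.Adj r s := by
  obtain ⟨v⟩ : Nonempty α := Fintype.card_pos_iff.mp (by omega)
  obtain ⟨w, -, hvw⟩ := exists_adj_ne_of_two_le_degree (htwo v) v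
  obtain ⟨w', hw'w, hvw'⟩ := exists_adj_ne_of_two_le_degree (htwo v) w
  obtain ⟨z, hzv, hwz⟩ := exists_adj_ne_of_two_le_degree (htwo w) v
  by_cases hzw' : z = w'
  · -- `v w z` is a triangle; an edge leaving it extends to a path on four vertices
    subst hzw'
    obtain ⟨y, hy⟩ := exists_notMem_of_length_lt (l := [v, w, z]) (by simp; omega)
    obtain ⟨x, t, hx, ht, hxt⟩ :=
      hconn.exists_adj_of_not (P := (· ∈ [v, w, z])) (p := v) (by simp) hy
    simp only [List.mem_cons, List.not_mem_nil, or_false] at hx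
    rcases hx with rfl | rfl | rfl
    · exact ⟨t, x, w, z, by grind, hxt.symm, hvw, hwz⟩
    · exact ⟨t, x, v, z, by grind, hxt.symm, hvw.symm, hvw'⟩
    · exact ⟨t, x, v, w, by grind, hxt.symm, hvw'.symm, hvw⟩
  · exact ⟨z, w, v, w', by grind, hwz.symm, hvw.symm, hvw'⟩

theorem exists_path5 (hconn : H.Connected) (htwo : ∀ v, 2 ≤ H.degree v)
    (hcard : 5 ≤ Fintype.card α) :
    ∃ a b c d e : α, [a, b, c, d, e].Nodup ∧ H.Adj a b ∧ H.Adj b c ∧ H.Adj c d ∧ H.Adj d e := by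
  obtain ⟨p, q, r, s, hP, hpq, hqr, hrs⟩ := exists_path4 hconn htwo (by omega)
  by_cases hext : ∃ t ∉ [p, q, r, s], H.Adj t p ∨ H.Adj s t
  · obtain ⟨t, ht, htp | hst⟩ := hext
    · exact ⟨t, p, q, r, s, by grind, htp, hpq, hqr, hrs⟩
    · exact ⟨p, q, r, s, t, by grind, hpq, hqr, hrs, hst⟩
  push Not at hext
  -- otherwise `p` and `s` have all their neighbours on the path, which closes it into a 4-cycle
  have hcyc : H.Adj p s ∨ (H.Adj p r ∧ H.Adj s q) := by
    obtain ⟨p', hp'q, hpp'⟩ := exists_adj_ne_of_two_le_degree (htwo p) q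
    obtain ⟨s', hs'r, hss'⟩ := exists_adj_ne_of_two_le_degree (htwo s) r
    have hp' : p' ∈ [p, q, r, s] := by_contra fun h => (hext p' h).1 hpp'.symm
    have hs' : s' ∈ [p, q, r, s] := by_contra fun h => (hext s' h).2 hss'
    grind
  obtain ⟨y, hy⟩ := exists_notMem_of_length_lt (l := [p, q, r, s]) (by simp; omega)
  obtain ⟨x, t, hx, ht, hxt⟩ :=
    hconn.exists_adj_of_not (P := (· ∈ [p, q, r, s])) (p := p) (by simp) hy
  simp only [List.mem_cons, List.not_mem_nil, or_false] at hx
  rcases hx with rfl | rfl | rfl | rfl <;> rcases hcyc with hps | ⟨hpr, hsq⟩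
  · exact ⟨t, x, q, r, s, by grind, hxt.symm, hpq, hqr, hrs⟩
  · exact ⟨t, x, q, r, s, by grind, hxt.symm, hpq, hqr, hrs⟩
  · exact ⟨t, x, p, s, r, by grind, hxt.symm, hpq.symm, hps, hrs.symm⟩
  · exact ⟨t, x, p, r, s, by grind, hxt.symm, hpq.symm, hpr, hrs⟩
  · exact ⟨t, x, s, p, q, by grind, hxt.symm, hrs, hps.symm, hpq⟩
  · exact ⟨t, x, p, q, s, by grind, hxt.symm, hpr.symm, hpq, hsq.symm⟩
  · exact ⟨t, x, r, q, p, by grind, hxt.symm, hrs.symm, hqr.symm, hpq.symm⟩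
  · exact ⟨t, x, r, q, p, by grind, hxt.symm, hrs.symm, hqr.symm, hpq.symm⟩

end LongPath

section K2Join

variable {α : Type*} [Fintype α] {H : SimpleGraph α} {b d : α}

theorem exists_equiv_fin_eq_zero_eq_one {m : ℕ} (hcard : Fintype.card α = m + 2) (hbd : b ≠ d) :
    ∃ e : α ≃ Fin (m + 2), e b = 0 ∧ e d = 1 := by
  let e₀ := (Fintype.equivFinOfCardEq hcard).trans (Equiv.swap (Fintype.equivFinOfCardEq hcard b) 0)
  have hb : e₀ b = 0 := Equiv.swap_apply_left _ _
  refine ⟨e₀.trans (Equiv.swap (e₀ d) 1), ?_, Equiv.swap_apply_left _ _⟩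
  simp only [Equiv.trans_apply, hb]
  refine Equiv.swap_apply_of_ne_of_ne (fun h => hbd (e₀.injective (hb.trans h))) ?_
  simp

theorem nonempty_iso_K2Join (hbd : b ≠ d)
    (hadj : ∀ v w, H.Adj v w ↔ v ≠ w ∧ (v = b ∨ v = d ∨ w = b ∨ w = d)) :
    Nonempty (H ≃g K2Join (Fintype.card α - 2)) := by
  have hcard : Fintype.card α = Fintype.card α - 2 + 2 := by
    have := Fintype.one_lt_card_iff.mpr ⟨b, d, hbd⟩
    omega
  obtain ⟨e, heb, hed⟩ := exists_equiv_fin_eq_zero_eq_one hcard hbd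
  have hlt : ∀ v, (e v : ℕ) < 2 ↔ v = b ∨ v = d := fun v => by
    rw [← e.apply_eq_iff_eq, ← e.apply_eq_iff_eq, heb, hed, Fin.ext_iff, Fin.ext_iff]
    simp only [Fin.val_zero, Fin.val_one]
    omega
  refine ⟨⟨e, fun {v w} => ?_⟩⟩
  rw [K2Join, fromRel_adj, hlt, hlt, hadj, e.apply_eq_iff_eq.ne]
  tauto

end K2Join

section TwoHubs

variable {α : Type*} [Fintype α] [DecidableEq α] {H : SimpleGraph α} [DecidableRel H.Adj]
  {b d : α}

theorem isUniversal_of_forall_degree_le_two (hbd : b ≠ d)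
    (hdeg : ∀ v, v ≠ b → v ≠ d → H.degree v ≤ 2)
    (hedge : 2 * Fintype.card α ≤ #H.edgeFinset + 3) : H.IsUniversal b ∧ H.IsUniversal d := by
  have hd : d ∈ univ.erase b := mem_erase.mpr ⟨hbd.symm, mem_univ d⟩
  have hrest : ∑ v ∈ (univ.erase b).erase d, H.degree v ≤ 2 * (Fintype.card α - 2) := by
    have := sum_le_card_nsmul ((univ.erase b).erase d) (fun v => H.degree v) 2 fun v hv =>
      hdeg v (ne_of_mem_erase (mem_of_mem_erase hv)) (ne_of_mem_erase hv)
    rwa [card_erase_of_mem hd, card_erase_of_mem (mem_univ b), card_univ, smul_eq_mul,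
      Nat.sub_sub, mul_comm] at this
  have hsum := H.sum_degrees_eq_twice_card_edges
  rw [← add_sum_erase _ _ (mem_univ b), ← add_sum_erase _ _ hd] at hsum
  have := H.degree_lt_card_verts b
  have := H.degree_lt_card_verts d
  rw [← degree_eq_card_sub_one, ← degree_eq_card_sub_one]
  omega

theorem adj_iff_of_isUniversal (hbd : b ≠ d) (hb : H.IsUniversal b) (hd : H.IsUniversal d)
    (hdeg : ∀ v, v ≠ b → v ≠ d → H.degree v ≤ 2) (v w : α) :
    H.Adj v w ↔ v ≠ w ∧ (v = b ∨ v = d ∨ w = b ∨ w = d) := by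
  refine ⟨fun h => ⟨h.ne, ?_⟩, ?_⟩
  · by_contra! hvw
    have hsub : ({b, d, w} : Finset α) ⊆ H.neighborFinset v := by
      intro t ht
      simp only [mem_insert, mem_singleton] at ht
      rw [mem_neighborFinset]
      rcases ht with rfl | rfl | rfl
      exacts [(hb (Ne.symm hvw.1)).symm, (hd (Ne.symm hvw.2.1)).symm, h]
    have := card_le_card hsub
    rw [card_neighborFinset_eq_degree, card_eq_three.mpr ⟨b, d, w, hbd, Ne.symm hvw.2.2.1,
      Ne.symm hvw.2.2.2, rfl⟩] at this
    have := hdeg v hvw.1 hvw.2.1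
    omega
  · rintro ⟨hne, rfl | rfl | rfl | rfl⟩
    exacts [hb hne, hd hne, (hb hne.symm).symm, (hd hne.symm).symm]

end TwoHubs

section PathFree

variable {α : Type*} {H : SimpleGraph α} (hfree : ¬ ContainsSub (pathGraph 6) H)
  {a b c d e : α} (hP : [a, b, c, d, e].Nodup)
  (hab : H.Adj a b) (hbc : H.Adj b c) (hcd : H.Adj c d) (hde : H.Adj d e)
include hfree hP hab hbc hcd hde

theorem not_adj_start_of_notMem {t : α} (ht : t ∉ [a, b, c, d, e]) : ¬ H.Adj t a :=
  fun h => hfree (containsSub_pathGraph_six (by grind) h hab hbc hcd hde)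

theorem not_adj_end_of_notMem {t : α} (ht : t ∉ [a, b, c, d, e]) : ¬ H.Adj t e :=
  fun h => hfree (containsSub_pathGraph_six (by grind)
    h hde.symm hcd.symm hbc.symm hab.symm)

theorem eq_or_eq_of_adj_of_adj_center {y y' t : α} (hy : y ∉ [a, b, c, d, e])
    (hy' : y' ∉ [a, b, c, d, e]) (hyc : H.Adj y c) (hyy' : H.Adj y y') (ht : H.Adj y' t) :
    t = y ∨ t = c := by
  by_contra! h
  by_cases htP : t ∈ [a, b, c, d, e]
  · simp only [List.mem_cons, List.not_mem_nil, or_false] at htP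
    rcases htP with rfl | rfl | rfl | rfl | rfl
    · exact not_adj_start_of_notMem hfree hP hab hbc hcd hde hy' ht
    · exact hfree (containsSub_pathGraph_six (by grind)
        hde.symm hcd.symm hyc.symm hyy' ht)
    · exact h.2 rfl
    · exact hfree (containsSub_pathGraph_six (by grind)
        hde.symm ht.symm hyy'.symm hyc hbc.symm)
    · exact hfree (containsSub_pathGraph_six (by grind)
        hab hbc hyc.symm hyy' ht)
  · exact hfree (containsSub_pathGraph_six (by grind)
      ht.symm hyy'.symm hyc hcd hde)

theorem forall_adj_eq_or_eq_of_notMem (hconn : H.Connected)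
    (hc : ∀ u ∉ [a, b, c, d, e], H.Adj u c → H.Adj u b ∨ H.Adj u d) :
    ∀ u ∉ [a, b, c, d, e], ∀ t, H.Adj u t → t = b ∨ t = d := by
  have hOa := fun u => not_adj_start_of_notMem hfree hP hab hbc hcd hde (t := u)
  have hOe := fun u => not_adj_end_of_notMem hfree hP hab hbc hcd hde (t := u)
  have hOc : ∀ u ∉ [a, b, c, d, e], ¬ H.Adj u c := fun u hu huc => by
    rcases hc u hu huc with hub | hud
    · exact hfree (containsSub_pathGraph_six (by grind) hab hub.symm huc hcd hde)
    · exact hfree (containsSub_pathGraph_six (by grind) hab hbc huc.symm hud hde)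
  have hhub : ∀ u ∉ [a, b, c, d, e], H.Adj u b ∨ H.Adj u d →
      ∀ t, H.Adj u t → t = b ∨ t = d := by
    intro u hu hbd t ht
    by_contra! h
    have htP : t ∉ [a, b, c, d, e] := by
      have := hOa u hu
      have := hOe u hu
      have := hOc u hu
      grind
    rcases hbd with hub | hud
    · exact hfree (containsSub_pathGraph_six (by grind) ht.symm hub hbc hcd hde)
    · exact hfree (containsSub_pathGraph_six (by grind) ht.symm hud hcd.symm hbc.symm hab.symm)
  have hbd : ∀ u ∉ [a, b, c, d, e], H.Adj u b ∨ H.Adj u d := by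
    by_contra! h
    obtain ⟨u₀, hu₀, hu₀b, hu₀d⟩ := h
    obtain ⟨s, t, ⟨hs, hsbd⟩, ht, hst⟩ := hconn.exists_adj_of_not
      (P := fun u => u ∉ [a, b, c, d, e] ∧ ¬ (H.Adj u b ∨ H.Adj u d)) (p := u₀) (q := b)
      ⟨hu₀, by tauto⟩ (by simp)
    by_cases htP : t ∈ [a, b, c, d, e]
    · have := hOa s hs
      have := hOe s hs
      have := hOc s hs
      grind
    · have := hhub t htP (not_not.mp fun h => ht ⟨htP, h⟩) s hst.symm
      grind
  exact fun u hu => hhub u hu (hbd u hu)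

variable [Fintype α] [DecidableEq α] [DecidableRel H.Adj] (htwo : ∀ v, 2 ≤ H.degree v)
include htwo

theorem adj_center_of_adj_of_adj_center {y y' : α} (hy : y ∉ [a, b, c, d, e])
    (hy' : y' ∉ [a, b, c, d, e]) (hyc : H.Adj y c) (hyy' : H.Adj y y') : H.Adj y' c :=
  (adj_and_adj_of_forall_adj
    (fun _ ht => eq_or_eq_of_adj_of_adj_center hfree hP hab hbc hcd hde hy hy' hyc hyy' ht)
    (htwo y')).2

theorem forall_adj_start_of_pendant {u u' : α} (hu : u ∉ [a, b, c, d, e])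
    (hu' : u' ∉ [a, b, c, d, e]) (huc : H.Adj u c) (huu' : H.Adj u u') (hub : ¬ H.Adj u b)
    (hu'b : ¬ H.Adj u' b) :
    (∀ t, H.Adj a t → t = b ∨ t = c) ∧ (∀ t, H.Adj b t → t = a ∨ t = c) := by
  have hnad : ¬ H.Adj a d := fun h => hfree (containsSub_pathGraph_six
    (by grind) huu'.symm huc hcd h.symm hab)
  have hnae : ¬ H.Adj a e := fun h => hfree (containsSub_pathGraph_six
    (by grind) huu'.symm huc hcd hde h.symm)
  have ha : ∀ t, H.Adj a t → t = b ∨ t = c := fun t ht => by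
    have : t ∈ [a, b, c, d, e] :=
      by_contra fun htP => not_adj_start_of_notMem hfree hP hab hbc hcd hde htP ht.symm
    grind
  have hac := (adj_and_adj_of_forall_adj ha (htwo a)).2
  have hnbd : ¬ H.Adj b d := fun h => hfree (containsSub_pathGraph_six
    (by grind) hde.symm h.symm hab.symm hac huc.symm)
  have hnbe : ¬ H.Adj b e := fun h => hfree (containsSub_pathGraph_six
    (by grind) huu'.symm huc hbc.symm h hde.symm)
  refine ⟨ha, fun t ht => ?_⟩
  by_contra! h
  exact hfree (containsSub_pathGraph_six (by grind)
    ht.symm hab.symm hac huc.symm huu')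

theorem degree_le_two_of_notMem_of_forall_adj (hconn : H.Connected)
    (hb : ∀ t, H.Adj b t → t = a ∨ t = c) (hd : ∀ t, H.Adj d t → t = c ∨ t = e) {y : α}
    (hy : y ∉ [a, b, c, d, e]) : H.degree y ≤ 2 := by
  have hnbr : ∀ y ∉ [a, b, c, d, e], ∀ t, H.Adj y t → t ∉ [a, b, c, d, e] ∨ t = c :=
    fun y hy t ht => by
      have := not_adj_start_of_notMem hfree hP hab hbc hcd hde hy
      have := not_adj_end_of_notMem hfree hP hab hbc hcd hde hy
      have := hb y
      have := hd y
      grind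
  have hOc : ∀ y ∉ [a, b, c, d, e], H.Adj y c := by
    by_contra! h
    obtain ⟨y₀, hy₀, hy₀c⟩ := h
    obtain ⟨s, t, ⟨hs, hsc⟩, ht, hst⟩ :=
      hconn.exists_adj_of_not (P := fun y => y ∉ [a, b, c, d, e] ∧ ¬ H.Adj y c)
        (p := y₀) (q := c) ⟨hy₀, hy₀c⟩ (by simp)
    rcases hnbr s hs t hst with htP | rfl
    · exact hsc (adj_center_of_adj_of_adj_center hfree hP hab hbc hcd hde htwo htP hs
        (not_not.mp fun h => ht ⟨htP, h⟩) hst.symm)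
    · exact hsc hst
  by_cases h : ∃ y', H.Adj y y' ∧ y' ≠ c
  · obtain ⟨y', hyy', hy'c⟩ := h
    have hy' := (hnbr y hy y' hyy').resolve_right hy'c
    exact degree_le_two_of_forall_adj fun t ht =>
      eq_or_eq_of_adj_of_adj_center hfree hP hab hbc hcd hde hy' hy (hOc y' hy') hyy'.symm ht
  · push Not at h
    exact degree_le_two_of_forall_adj (p := c) (q := c) fun t ht => Or.inl (h t ht)

theorem forall_degree_le_two_of_pendant (hconn : H.Connected) {u : α}
    (hu : u ∉ [a, b, c, d, e]) (huc : H.Adj u c) (hub : ¬ H.Adj u b) (hud : ¬ H.Adj u d) :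
    ∀ v, v ≠ c → H.degree v ≤ 2 := by
  obtain ⟨u', hu'c, huu'⟩ := exists_adj_ne_of_two_le_degree (htwo u) c
  have hu' : u' ∉ [a, b, c, d, e] := by
    have := not_adj_start_of_notMem hfree hP hab hbc hcd hde hu
    have := not_adj_end_of_notMem hfree hP hab hbc hcd hde hu
    grind
  have hN := fun t =>
    eq_or_eq_of_adj_of_adj_center hfree hP hab hbc hcd hde hu hu' huc huu' (t := t)
  have hu'b : ¬ H.Adj u' b := fun h => by grind
  have hu'd : ¬ H.Adj u' d := fun h => by grind
  have hrev : [e, d, c, b, a].Nodup := by grind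
  obtain ⟨ha, hb⟩ :=
    forall_adj_start_of_pendant hfree hP hab hbc hcd hde htwo hu hu' huc huu' hub hu'b
  obtain ⟨he, hd⟩ := forall_adj_start_of_pendant hfree hrev hde.symm hcd.symm hbc.symm hab.symm
    htwo (by grind) (by grind) huc huu' hud hu'd
  intro v hvc
  by_cases hv : v ∈ [a, b, c, d, e]
  · simp only [List.mem_cons, List.not_mem_nil, or_false] at hv
    rcases hv with rfl | rfl | rfl | rfl | rfl
    exacts [degree_le_two_of_forall_adj ha, degree_le_two_of_forall_adj hb, absurd rfl hvc,
      degree_le_two_of_forall_adj (fun t ht => (hd t ht).symm), degree_le_two_of_forall_adj he]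
  · exact degree_le_two_of_notMem_of_forall_adj hfree hP hab hbc hcd hde htwo hconn hb
      (fun t ht => (hd t ht).symm) hv

theorem forall_degree_le_two_of_forall_adj_eq_or_eq (hcard : 6 ≤ Fintype.card α)
    (hO : ∀ u ∉ [a, b, c, d, e], ∀ t, H.Adj u t → t = b ∨ t = d) :
    ∀ v, v ≠ b → v ≠ d → H.degree v ≤ 2 := by
  obtain ⟨u, hu⟩ := exists_notMem_of_length_lt (l := [a, b, c, d, e]) (by simp; omega)
  obtain ⟨hub, hud⟩ := adj_and_adj_of_forall_adj (hO u hu) (htwo u)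
  have hnae : ¬ H.Adj a e := fun h => hfree (containsSub_pathGraph_six (by grind)
    hub hab.symm h hde.symm hcd.symm)
  have hnac : ¬ H.Adj a c := fun h => hfree (containsSub_pathGraph_six (by grind)
    hde.symm hud.symm hub hab.symm h)
  have hnce : ¬ H.Adj c e := fun h => hfree (containsSub_pathGraph_six (by grind)
    hab hub.symm hud hde h.symm)
  intro v hvb hvd
  by_cases hv : v ∈ [a, b, c, d, e]
  · refine degree_le_two_of_forall_adj (p := b) (q := d) fun t ht => ?_
    by_contra! h
    have htP : t ∈ [a, b, c, d, e] :=
      by_contra fun htP => (hO t htP v ht.symm).elim hvb hvd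
    grind
  · exact degree_le_two_of_forall_adj (hO v hv)

end PathFree

section Structure

variable {α : Type*} [Fintype α] [DecidableEq α] {H : SimpleGraph α} [DecidableRel H.Adj]

theorem exists_ne_forall_degree_le_two (hconn : H.Connected)
    (hfree : ¬ ContainsSub (pathGraph 6) H) (htwo : ∀ v, 2 ≤ H.degree v)
    (hcard : 6 ≤ Fintype.card α) :
    ∃ b d : α, b ≠ d ∧ ∀ v, v ≠ b → v ≠ d → H.degree v ≤ 2 := by
  obtain ⟨a, b, c, d, e, hP, hab, hbc, hcd, hde⟩ := exists_path5 hconn htwo (by omega)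
  by_cases hpend : ∃ u ∉ [a, b, c, d, e], H.Adj u c ∧ ¬ H.Adj u b ∧ ¬ H.Adj u d
  · obtain ⟨u, hu, huc, hub, hud⟩ := hpend
    -- only `c` may have degree above 2 here; `a` is an arbitrary second vertex
    exact ⟨c, a, by grind, fun v hvc _ => forall_degree_le_two_of_pendant hfree hP hab hbc hcd hde
      htwo hconn hu huc hub hud v hvc⟩
  · refine ⟨b, d, by grind, forall_degree_le_two_of_forall_adj_eq_or_eq hfree hP hab hbc hcd hde
      htwo hcard (forall_adj_eq_or_eq_of_notMem hfree hP hab hbc hcd hde hconn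
        fun u hu huc => ?_)⟩
    by_contra! h
    exact hpend ⟨u, hu, huc, h⟩

theorem nonempty_iso_K2Join_of_pathGraph_free (hconn : H.Connected)
    (hfree : ¬ ContainsSub (pathGraph 6) H) (htwo : ∀ v, 2 ≤ H.degree v)
    (hcard : 6 ≤ Fintype.card α) (hedge : 2 * Fintype.card α ≤ #H.edgeFinset + 3) :
    Nonempty (H ≃g K2Join (Fintype.card α - 2)) := by
  obtain ⟨b, d, hbd, hdeg⟩ := exists_ne_forall_degree_le_two hconn hfree htwo hcard
  obtain ⟨hb, hd⟩ := isUniversal_of_forall_degree_le_two hbd hdeg hedge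
  exact nonempty_iso_K2Join hbd (adj_iff_of_isUniversal hbd hb hd hdeg)

end Structure

section Induce

variable {V : Type*} (G : SimpleGraph V) [DecidableRel G.Adj] (S : Finset V)

theorem degree_induce_eq_card_filter (v : (S : Set V)) :
    (G.induce (S : Set V)).degree v = #{w ∈ S | G.Adj v w} := by
  rw [← card_neighborFinset_eq_degree, ← card_map (.subtype _)]
  congr 1
  ext w
  simp [and_comm]

theorem sum_card_filter_adj_eq :
    ∑ u ∈ S, #{w ∈ S | G.Adj u w} = 2 * #(G.induce (S : Set V)).edgeFinset := by
  rw [← sum_degrees_eq_twice_card_edges, ← Finset.sum_coe_sort S]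
  exact Fintype.sum_congr _ _ fun v => (degree_induce_eq_card_filter G S v).symm

theorem edgesIn_eq_card_edgeFinset_induce :
    edgesIn G S = #(G.induce (S : Set V)).edgeFinset := by
  rw [← card_map (Function.Embedding.subtype (· ∈ (S : Set V))).sym2Map, edgesIn,
    ← Set.ncard_coe_finset]
  congr 1
  ext e
  induction e with
  | _ v w =>
    simp only [Set.mem_ofPred_eq, mem_edgeSet, Sym2.mem_iff, forall_eq_or_imp, forall_eq,
      coe_map, Set.mem_image, mem_coe, mem_edgeFinset]
    constructor
    · rintro ⟨h, hv, hw⟩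
      exact ⟨s(⟨v, hv⟩, ⟨w, hw⟩), h, rfl⟩
    · rintro ⟨x, hx, hxe⟩
      induction x with
      | _ v' w' =>
        obtain ⟨rfl, rfl⟩ | ⟨rfl, rfl⟩ := Sym2.eq_iff.mp hxe
        exacts [⟨hx, v'.2, w'.2⟩, ⟨hx.symm, w'.2, v'.2⟩]

end Induce
end SimpleGraph

open SimpleGraph

theorem etaVal_le {V : Type*} [Fintype V] [DecidableEq V] (G : SimpleGraph V) [DecidableRel G.Adj]
    {x : V → ℝ} {ustar : V} (hpos : 0 < x ustar) (hmax : ∀ v, x v ≤ x ustar) {S : Finset V}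
    (hdelta : ∀ u ∈ S, 2 ≤ #{w ∈ S | G.Adj u w}) :
    etaVal G x ustar S ≤ #(G.induce (S : Set V)).edgeFinset - 2 * #S := by
  have hterm : ∀ u ∈ S, ((#{w ∈ S | G.Adj u w} : ℝ) - 2) * x u / x ustar
      ≤ (#{w ∈ S | G.Adj u w} : ℝ) - 2 := fun u hu => by
    have : (2 : ℝ) ≤ #{w ∈ S | G.Adj u w} := by exact_mod_cast hdelta u hu
    rw [mul_div_assoc]
    exact mul_le_of_le_one_right (by linarith) (div_le_one_of_le₀ (hmax u) hpos.le)
  have hsum : ∑ u ∈ S, ((#{w ∈ S | G.Adj u w} : ℝ) - 2)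
      = 2 * #(G.induce (S : Set V)).edgeFinset - 2 * #S := by
    rw [sum_sub_distrib, ← Nat.cast_sum, sum_card_filter_adj_eq]
    simp [mul_comm]
  rw [etaVal, edgesIn_eq_card_edgeFinset_induce]
  linarith [sum_le_sum hterm]

theorem eta_eq_neg_three_structure_general {V : Type} [Fintype V] [DecidableEq V]
    (G : SimpleGraph V) [DecidableRel G.Adj]
    (x : V → ℝ) (hpos : ∀ v, 0 < x v)
    (ustar : V) (hmax : ∀ v, x v ≤ x ustar)
    (hP6free : ¬ ContainsSub (SimpleGraph.pathGraph 6) (G.induce (G.neighborSet ustar)))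
    (S : Finset V)
    (hSnbr : ∀ v ∈ S, G.Adj ustar v)
    (hSconn : (G.induce (S : Set V)).Connected)
    (hScard : 6 ≤ S.card)
    (hdelta : ∀ u ∈ S, 2 ≤ (S.filter (fun w => G.Adj u w)).card)
    (heta : etaVal G x ustar S = -3) :
    Nonempty (G.induce (S : Set V) ≃g K2Join (S.card - 2)) := by
  have hcard : Fintype.card (S : Set V) = #S := by simp
  have hfree : ¬ ContainsSub (pathGraph 6) (G.induce (S : Set V)) := fun h =>
    hP6free (h.trans_embedding (induceHomOfLE G fun v hv => hSnbr v hv))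
  have htwo : ∀ v, 2 ≤ (G.induce (S : Set V)).degree v := fun v => by
    rw [degree_induce_eq_card_filter]
    exact hdelta v v.2
  have hedge : 2 * #S ≤ #(G.induce (S : Set V)).edgeFinset + 3 := by
    have := etaVal_le G (hpos ustar) hmax hdelta
    rw [heta] at this
    exact_mod_cast (by linarith : (2 * #S : ℝ) ≤ #(G.induce (S : Set V)).edgeFinset + 3)
  rw [← hcard] at hScard hedge ⊢
  exact nonempty_iso_K2Join_of_pathGraph_free hSconn hfree htwo hScard hedge

/-- If `H = G[S]` is a component of `G[N(u*)]` with at least 6 vertices and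
minimum degree at least 2, `G[N(u*)]` is `P₆`-free, and `η(H) = -3`, then
`H ≅ K₂ ∨ (|V(H)| − 2)K₁`. -/
theorem eta_eq_neg_three_structure {V : Type} [Fintype V] [DecidableEq V]
    (G : SimpleGraph V) [DecidableRel G.Adj] (hconn : G.Connected)
    (x : V → ℝ) (hpos : ∀ v, 0 < x v) (heig : G.adjMatrix ℝ *ᵥ x = specRad G • x)
    (ustar : V) (hmax : ∀ v, x v ≤ x ustar)
    (hP6free : ¬ ContainsSub (SimpleGraph.pathGraph 6) (G.induce (G.neighborSet ustar)))
    (S : Finset V)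
    (hSnbr : ∀ v ∈ S, G.Adj ustar v)
    (hSconn : (G.induce (S : Set V)).Connected)
    (hSclosed : ∀ a ∈ S, ∀ b, G.Adj ustar b → G.Adj a b → b ∈ S)
    (hScard : 6 ≤ S.card)
    (hdelta : ∀ u ∈ S, 2 ≤ (S.filter (fun w => G.Adj u w)).card)
    (heta : etaVal G x ustar S = -3) :
    Nonempty (G.induce (S : Set V) ≃g K2Join (S.card - 2)) :=
  eta_eq_neg_three_structure_general G x hpos ustar hmax hP6free S hSnbr hSconn hScard hdelta heta
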